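/- Fix ξ ∈ ℝⁿ and a unit vector v̂ ∈ ℝⁿ with |v̂·e₁| < 1. Then there exists r₀ > 0 such that for every r ≥ r₀ the function s ↦ V(ξ s + r v̂ s + e₁ s²/2) is Lebesgue integrable on ℝ, and ∫_ℝ V(ξ s + r v̂ s + e₁ s²/2) ds → 0 as r → ∞. -/

import Mathlib

open scoped InnerProductSpace
open MeasureTheory Real Filter Topology

noncomputable section

/-!
Write the curve as `x_r(s) = s w_r + (s²/2) e₁` with `w_r = ξ + r v̂`. Since `|v̂·e₁| < 1`, for
large `r` the angle between `w_r` and `e₁` stays bounded away from `0` and `π`, so the cross term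
in `|x_r(s)|²` is dominated and `|x_r(s)|² ≥ κ (r² s² + s⁴)`. Hence
`|V(x_r(s))| ≤ C (1 + κ (r² s² + s⁴))^{-γ₀/2}`: this majorant is dominated uniformly in `r` by
`C (1 + κ s⁴)^{-γ₀/2}`, integrable because `2γ₀ > 1`, and tends to `0` for every `s ≠ 0`, so
dominated convergence gives the limit.
-/

section InnerProduct

variable {E : Type*} [NormedAddCommGroup E] [InnerProductSpace ℝ E]

lemma one_sub_mul_le_norm_add_sq_of_abs_inner_le {a b : E} {δ : ℝ} (hδ : 0 ≤ δ)
    (h : |⟪a, b⟫_ℝ| ≤ δ * (‖a‖ * ‖b‖)) :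
    (1 - δ) * (‖a‖ ^ 2 + ‖b‖ ^ 2) ≤ ‖a + b‖ ^ 2 := by
  have hamgm := mul_le_mul_of_nonneg_left (two_mul_le_add_sq ‖a‖ ‖b‖) hδ
  rw [norm_add_sq_real]
  nlinarith [neg_abs_le ⟪a, b⟫_ℝ]

lemma one_sub_mul_le_norm_smul_add_smul_sq {w u : E} (hu : ‖u‖ = 1) {δ : ℝ} (hδ : 0 ≤ δ)
    (h : |⟪w, u⟫_ℝ| ≤ δ * ‖w‖) (s : ℝ) :
    (1 - δ) * (s ^ 2 * ‖w‖ ^ 2 + s ^ 4 / 4) ≤ ‖s • w + (s ^ 2 / 2) • u‖ ^ 2 := by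
  have hinner : |⟪s • w, (s ^ 2 / 2) • u⟫_ℝ| ≤ δ * (‖s • w‖ * ‖(s ^ 2 / 2) • u‖) := by
    rw [real_inner_smul_left, real_inner_smul_right, norm_smul, norm_smul, hu, abs_mul,
      abs_mul, Real.norm_eq_abs, Real.norm_eq_abs, abs_of_nonneg (by positivity : 0 ≤ s ^ 2 / 2)]
    have := mul_le_mul_of_nonneg_left h (by positivity : 0 ≤ |s| * (s ^ 2 / 2))
    linarith
  have := one_sub_mul_le_norm_add_sq_of_abs_inner_le hδ hinner
  rw [norm_smul, norm_smul, hu, mul_pow, Real.norm_eq_abs, sq_abs, Real.norm_eq_abs,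
    abs_of_nonneg (by positivity : 0 ≤ s ^ 2 / 2), mul_one] at this
  convert this using 3
  ring

variable {ξ v : E}

lemma sub_norm_le_norm_add_smul (hv : ‖v‖ = 1) {r : ℝ} (hr : 0 ≤ r) : r - ‖ξ‖ ≤ ‖ξ + r • v‖ := by
  have := norm_sub_norm_le (r • v) (-ξ)
  rwa [sub_neg_eq_add, add_comm, norm_neg, norm_smul, hv, mul_one, Real.norm_eq_abs,
    abs_of_nonneg hr] at this

lemma eventually_half_le_norm_add_smul (hv : ‖v‖ = 1) :
    ∀ᶠ r : ℝ in atTop, r / 2 ≤ ‖ξ + r • v‖ := by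
  filter_upwards [eventually_ge_atTop (2 * ‖ξ‖)] with r hr
  have hr0 : 0 ≤ r := by linarith [norm_nonneg ξ]
  linarith [sub_norm_le_norm_add_smul (ξ := ξ) hv hr0]

lemma eventually_abs_inner_add_smul_le {u : E} (hv : ‖v‖ = 1) (hu : ‖u‖ = 1) {δ : ℝ}
    (h : |⟪v, u⟫_ℝ| < δ) :
    ∀ᶠ r : ℝ in atTop, |⟪ξ + r • v, u⟫_ℝ| ≤ δ * ‖ξ + r • v‖ := by
  have hδ : 0 < δ - |⟪v, u⟫_ℝ| := by linarith
  filter_upwards [eventually_ge_atTop ((1 + δ) * ‖ξ‖ / (δ - |⟪v, u⟫_ℝ|)),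
    eventually_ge_atTop 0] with r hr hr0
  have hinner : |⟪ξ + r • v, u⟫_ℝ| ≤ ‖ξ‖ + r * |⟪v, u⟫_ℝ| := by
    rw [inner_add_left, real_inner_smul_left]
    calc _ ≤ |⟪ξ, u⟫_ℝ| + |r * ⟪v, u⟫_ℝ| := abs_add_le _ _
      _ ≤ ‖ξ‖ + r * |⟪v, u⟫_ℝ| := by
        have hξu := abs_real_inner_le_norm ξ u
        rw [hu, mul_one] at hξu
        rw [abs_mul, abs_of_nonneg hr0]
        linarith
  have hnorm := sub_norm_le_norm_add_smul (ξ := ξ) hv hr0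
  rw [div_le_iff₀ hδ] at hr
  nlinarith [abs_nonneg ⟪v, u⟫_ℝ]

lemma eventually_mul_le_norm_curve_sq {u : E} (hv : ‖v‖ = 1) (hu : ‖u‖ = 1)
    (h : |⟪v, u⟫_ℝ| < 1) :
    ∃ κ > (0 : ℝ), ∀ᶠ r : ℝ in atTop, ∀ s : ℝ,
      κ * (r ^ 2 * s ^ 2 + s ^ 4) ≤ ‖s • ξ + (r * s) • v + (s ^ 2 / 2) • u‖ ^ 2 := by
  obtain ⟨δ, hδ, hδ1⟩ := exists_between h
  have hδ0 : 0 ≤ δ := (abs_nonneg _).trans hδ.le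
  refine ⟨(1 - δ) / 4, by linarith, ?_⟩
  filter_upwards [eventually_half_le_norm_add_smul (ξ := ξ) hv,
    eventually_abs_inner_add_smul_le (ξ := ξ) hv hu hδ,
    eventually_ge_atTop 0] with r hhalf hcos hr0 s
  have hcurve : s • ξ + (r * s) • v + (s ^ 2 / 2) • u = s • (ξ + r • v) + (s ^ 2 / 2) • u := by
    rw [smul_add, smul_smul, mul_comm]
  have hw : r ^ 2 / 4 ≤ ‖ξ + r • v‖ ^ 2 := by nlinarith
  rw [hcurve]
  refine le_trans ?_ (one_sub_mul_le_norm_smul_add_smul_sq hu hδ0 hcos s)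
  have := mul_le_mul_of_nonneg_left hw (sq_nonneg s)
  nlinarith

end InnerProduct

section Majorant

lemma sqrt_one_add_rpow_neg_le {a b γ : ℝ} (ha : 0 ≤ a) (hab : a ≤ b) (hγ : 0 ≤ γ) :
    √(1 + b) ^ (-γ) ≤ √(1 + a) ^ (-γ) :=
  Real.rpow_le_rpow_of_nonpos (by positivity) (Real.sqrt_le_sqrt (by linarith)) (by linarith)

lemma continuous_sqrt_one_add_rpow_neg {f : ℝ → ℝ} (hf : Continuous f) (hf0 : ∀ s, 0 ≤ f s)
    (γ : ℝ) : Continuous fun s => √(1 + f s) ^ (-γ) :=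
  (hf.const_add 1).sqrt.rpow_const fun s => Or.inl (Real.sqrt_pos.2 (by linarith [hf0 s])).ne'

variable {κ γ : ℝ}

lemma integrable_sqrt_one_add_mul_pow_four_rpow_neg (hκ : 0 < κ) (hγ : 1 / 2 < γ) :
    Integrable fun s : ℝ => √(1 + κ * s ^ 4) ^ (-γ) := by
  obtain ⟨c, hc, hc1, hcκ⟩ : ∃ c : ℝ, 0 < c ∧ c ≤ 1 / 2 ∧ c ≤ κ / 2 :=
    ⟨min 1 κ / 2, by positivity, by linarith [min_le_left 1 κ], by linarith [min_le_right 1 κ]⟩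
  have hquartic : ∀ s : ℝ, c * (1 + s ^ 2) ^ 2 ≤ 1 + κ * s ^ 4 := fun s => by
    have := mul_le_mul_of_nonneg_right hcκ (by positivity : 0 ≤ s ^ 4)
    nlinarith [mul_nonneg hc.le (sq_nonneg (1 - s ^ 2))]
  have hdecay : Integrable fun s : ℝ => √c ^ (-γ) * (1 + ‖s‖ ^ 2) ^ (-(2 * γ) / 2) :=
    (integrable_rpow_neg_one_add_norm_sq (by simp; linarith)).const_mul _
  refine hdecay.mono' (continuous_sqrt_one_add_rpow_neg (f := fun s => κ * s ^ 4) (by fun_prop)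
    (fun s => by positivity) γ).aestronglyMeasurable (ae_of_all _ fun s => ?_)
  rw [Real.norm_of_nonneg (Real.rpow_nonneg (Real.sqrt_nonneg _) _), Real.norm_eq_abs, sq_abs,
    show -(2 * γ) / 2 = -γ by ring, ← Real.mul_rpow (by positivity) (by positivity)]
  refine Real.rpow_le_rpow_of_nonpos (by positivity) ?_ (by linarith)
  rw [← Real.sqrt_sq (by positivity : 0 ≤ 1 + s ^ 2), ← Real.sqrt_mul hc.le]
  exact Real.sqrt_le_sqrt (by linarith [hquartic s])

lemma norm_sqrt_one_add_mul_rpow_neg_le (hκ : 0 ≤ κ) (hγ : 0 ≤ γ) (r s : ℝ) :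
    ‖√(1 + κ * (r ^ 2 * s ^ 2 + s ^ 4)) ^ (-γ)‖ ≤ √(1 + κ * s ^ 4) ^ (-γ) := by
  rw [Real.norm_of_nonneg (Real.rpow_nonneg (Real.sqrt_nonneg _) _)]
  exact sqrt_one_add_rpow_neg_le (by positivity) (by nlinarith [sq_nonneg (r * s)]) hγ

lemma integrable_sqrt_one_add_mul_rpow_neg (hκ : 0 < κ) (hγ : 1 / 2 < γ) (r : ℝ) :
    Integrable fun s : ℝ => √(1 + κ * (r ^ 2 * s ^ 2 + s ^ 4)) ^ (-γ) :=
  (integrable_sqrt_one_add_mul_pow_four_rpow_neg hκ hγ).mono'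
    (continuous_sqrt_one_add_rpow_neg (f := fun s => κ * (r ^ 2 * s ^ 2 + s ^ 4)) (by fun_prop)
      (fun s => by positivity) γ).aestronglyMeasurable
    (ae_of_all _ (norm_sqrt_one_add_mul_rpow_neg_le hκ.le (by linarith) r))

lemma tendsto_integral_sqrt_one_add_mul_rpow_neg (hκ : 0 < κ) (hγ : 1 / 2 < γ) :
    Tendsto (fun r : ℝ => ∫ s : ℝ, √(1 + κ * (r ^ 2 * s ^ 2 + s ^ 4)) ^ (-γ)) atTop (𝓝 0) := by
  have hlim : ∀ s : ℝ, s ≠ 0 →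
      Tendsto (fun r : ℝ => √(1 + κ * (r ^ 2 * s ^ 2 + s ^ 4)) ^ (-γ)) atTop (𝓝 0) := by
    intro s hs
    have hquad : Tendsto (fun r : ℝ => r ^ 2 * (κ * s ^ 2)) atTop atTop :=
      (tendsto_pow_atTop two_ne_zero).atTop_mul_const (by positivity)
    have hbase : Tendsto (fun r : ℝ => 1 + κ * (r ^ 2 * s ^ 2 + s ^ 4)) atTop atTop :=
      tendsto_atTop_mono (fun r => by nlinarith [sq_nonneg (s ^ 2)]) hquad
    exact (tendsto_rpow_neg_atTop (by linarith)).comp (tendsto_sqrt_atTop.comp hbase)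
  simpa only [integral_zero] using tendsto_integral_filter_of_dominated_convergence
    (fun s : ℝ => √(1 + κ * s ^ 4) ^ (-γ))
    (Eventually.of_forall fun r =>
      (integrable_sqrt_one_add_mul_rpow_neg hκ hγ r).aestronglyMeasurable)
    (Eventually.of_forall fun r =>
      ae_of_all _ (norm_sqrt_one_add_mul_rpow_neg_le hκ.le (by linarith) r))
    (integrable_sqrt_one_add_mul_pow_four_rpow_neg hκ hγ)
    ((Measure.ae_ne volume 0).mono hlim)

end Majorant

theorem stmt_19 (n : ℕ) (hn : 2 ≤ n)
    (e1 : EuclideanSpace ℝ (Fin n))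
    (he1 : e1 = EuclideanSpace.single ⟨0, by omega⟩ (1 : ℝ))
    (V : EuclideanSpace ℝ (Fin n) → ℝ) (hV : Continuous V)
    (C γ0 : ℝ) (hC : 0 < C) (hγ0 : 1 / 2 < γ0)
    (hVb : ∀ x, |V x| ≤ C * Real.sqrt (1 + ‖x‖ ^ 2) ^ (-γ0))
    (ξ : EuclideanSpace ℝ (Fin n))
    (vhat : EuclideanSpace ℝ (Fin n)) (hvhat : ‖vhat‖ = 1)
    (hδ : |⟪vhat, e1⟫_ℝ| < 1) :
    ∃ r0 > (0 : ℝ),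
      (∀ r : ℝ, r0 ≤ r → MeasureTheory.Integrable
        (fun s : ℝ => V (s • ξ + (r * s) • vhat + (s ^ 2 / 2) • e1))) ∧
      Filter.Tendsto
        (fun r : ℝ => ∫ s : ℝ, V (s • ξ + (r * s) • vhat + (s ^ 2 / 2) • e1))
        Filter.atTop (nhds 0) := by
  have he1n : ‖e1‖ = 1 := by rw [he1, PiLp.norm_single, norm_one]
  obtain ⟨κ, hκ, hlow⟩ := eventually_mul_le_norm_curve_sq (ξ := ξ) hvhat he1n hδ
  have hbound : ∀ᶠ r : ℝ in atTop, ∀ s : ℝ, ‖V (s • ξ + (r * s) • vhat + (s ^ 2 / 2) • e1)‖ ≤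
      C * √(1 + κ * (r ^ 2 * s ^ 2 + s ^ 4)) ^ (-γ0) := by
    filter_upwards [hlow] with r hr s
    exact (hVb _).trans <| mul_le_mul_of_nonneg_left
      (sqrt_one_add_rpow_neg_le (by positivity) (hr s) (by linarith)) hC.le
  have hmaj (r : ℝ) := (integrable_sqrt_one_add_mul_rpow_neg hκ hγ0 r).const_mul C
  obtain ⟨r0, hr0⟩ := eventually_atTop.1 hbound
  refine ⟨max r0 1, by positivity, fun r hr => ?_, ?_⟩
  · exact (hmaj r).mono' (hV.comp (by fun_prop)).aestronglyMeasurable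
      (ae_of_all _ (hr0 r (le_of_max_le_left hr)))
  · refine squeeze_zero_norm' (hbound.mono fun r hr =>
      norm_integral_le_of_norm_le (hmaj r) (ae_of_all _ hr)) ?_
    simpa only [integral_const_mul, mul_zero] using
      (tendsto_integral_sqrt_one_add_mul_rpow_neg hκ hγ0).const_mul C
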